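/- Let n be a nonzero integer that is not a perfect square. Every Diophantine m-tuple with the property D(n) that contains the element 1 is a norm tuple: each of its elements is the norm of a nonzero integral ideal of ℚ(√n). -/

import Mathlib

/-!
If `t i₀ = 1`, then for every other element `t i + n = r ^ 2`, so `t i = r ^ 2 - n` is the norm of
`r + √n`, hence of the principal ideal it generates; the element `1` is the norm of the unit ideal.
-/

open NumberField Module

theorem Algebra.norm_algebraMap_add_of_sq_eq {F L : Type*} [Field F] [Field L] [Algebra F L]
    (hL : finrank F L = 2) {s : L} (hs_not : ∀ a : F, algebraMap F L a ≠ s) {d : F}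
    (hs : s ^ 2 = algebraMap F L d) (a : F) :
    Algebra.norm F (algebraMap F L a + s) = a ^ 2 - d := by
  have hli : LinearIndependent F ![1, s] :=
    (LinearIndependent.pair_iff' one_ne_zero).2 fun c => by
      simpa [Algebra.smul_def] using hs_not c
  let b := basisOfLinearIndependentOfCardEqFinrank hli (by simp [hL])
  have hb0 : b 0 = 1 := by simp [b]
  have hb1 : b 1 = s := by simp [b]
  have hmul0 : (algebraMap F L a + s) * b 0 = a • b 0 + b 1 := by
    simp [hb0, hb1, Algebra.smul_def]
  have hmul1 : (algebraMap F L a + s) * b 1 = d • b 0 + a • b 1 := by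
    simp only [hb0, hb1, Algebra.smul_def, mul_one]
    linear_combination hs
  rw [Algebra.norm_eq_matrix_det b, Matrix.det_fin_two]
  simp [Algebra.leftMulMatrix_eq_repr_mul, hmul0, hmul1]
  ring

theorem ratCast_ne_of_sq_eq_intCast {K : Type*} [Field K] [CharZero K] {n : ℤ}
    (hn : ¬ IsSquare n) {s : K} (hs : s ^ 2 = n) (q : ℚ) : (q : K) ≠ s := by
  rintro rfl
  have hq : q ^ 2 = n := by exact_mod_cast hs
  exact hn (Rat.isSquare_intCast_iff.1 ⟨q, by rw [← hq, sq]⟩)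

theorem exists_ideal_absNorm_eq_sq_sub {K : Type*} [Field K] [NumberField K]
    (hK : finrank ℚ K = 2) {n : ℤ} (hn : ¬ IsSquare n) {s : K} (hs : s ^ 2 = n) (r : ℤ) :
    ∃ 𝔞 : Ideal (𝓞 K), 𝔞 ≠ ⊥ ∧ Ideal.absNorm 𝔞 = (r ^ 2 - n).natAbs := by
  have hs_int : IsIntegral ℤ s :=
    .of_pow two_pos (hs ▸ isIntegral_algebraMap (R := ℤ) (x := n))
  let x : 𝓞 K := ⟨r + s, .add (isIntegral_algebraMap (x := r)) hs_int⟩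
  have hs_not : ∀ q : ℚ, algebraMap ℚ K q ≠ s := ratCast_ne_of_sq_eq_intCast hn hs
  have hnorm : Algebra.norm ℤ x = r ^ 2 - n := by
    have h := Algebra.norm_algebraMap_add_of_sq_eq hK hs_not (d := n) (by simpa using hs) r
    rw [← Int.cast_inj (α := ℚ), Algebra.coe_norm_int, show (x : K) = r + s from rfl]
    push_cast
    simpa using h
  refine ⟨Ideal.span {x}, ?_, by rw [Ideal.absNorm_span_singleton, hnorm]⟩
  rw [Ne, Ideal.span_singleton_eq_bot]
  intro hx
  apply hs_not (-r)
  have : (r : K) + s = 0 := congrArg ((↑) : 𝓞 K → K) hx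
  simp only [map_neg, map_intCast]
  linear_combination (-1 : K) * this

theorem diophantine_tuple_containing_one_is_norm_tuple_general
    (n : ℤ) (hnsq : ¬ IsSquare n)
    (K : Type*) [Field K] [NumberField K] (hK : finrank ℚ K = 2)
    (s : K) (hs : s ^ 2 = (n : K))
    (m : ℕ) (t : Fin m → ℕ)
    (hD : ∀ i j, i ≠ j → ∃ r : ℤ, (t i : ℤ) * t j + n = r ^ 2)
    (hone : ∃ i, t i = 1) :
    ∀ i, ∃ 𝔞 : Ideal (𝓞 K), 𝔞 ≠ ⊥ ∧ Ideal.absNorm 𝔞 = t i := by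
  intro i
  obtain ⟨i₀, hi₀⟩ := hone
  by_cases hti : t i = 1
  · exact ⟨⊤, top_ne_bot, by rw [hti, Ideal.absNorm_top]⟩
  obtain ⟨r, hr⟩ := hD i i₀ fun h => hti (h ▸ hi₀)
  have hti_eq : r ^ 2 - n = t i := by rw [← hr, hi₀]; ring
  simpa [hti_eq] using exists_ideal_absNorm_eq_sq_sub hK hnsq hs r

/-- A Diophantine `m`-tuple with the property `D(n)` which contains `1`
is a norm tuple: each of its elements is the norm of a nonzero integral ideal of `ℚ(√n)`. -/
theorem diophantine_tuple_containing_one_is_norm_tuple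
    (n : ℤ) (hn : n ≠ 0) (hnsq : ¬ IsSquare n)
    (K : Type*) [Field K] [NumberField K] (hK : finrank ℚ K = 2)
    (s : K) (hs : s ^ 2 = (n : K))
    (m : ℕ) (t : Fin m → ℕ) (hinj : Function.Injective t) (hpos : ∀ i, 0 < t i)
    (hD : ∀ i j, i ≠ j → ∃ r : ℤ, (t i : ℤ) * t j + n = r ^ 2)
    (hone : ∃ i, t i = 1) :
    ∀ i, ∃ 𝔞 : Ideal (𝓞 K), 𝔞 ≠ ⊥ ∧ Ideal.absNorm 𝔞 = t i :=
  diophantine_tuple_containing_one_is_norm_tuple_general n hnsq K hK s hs m t hD hone
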